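/- arXiv:1907.00723 — 3 statements merged into one kernel-verified Lean document; each statement's English description precedes it below -/
import Mathlib

section
/- Let p ≥ 1, let Σ₀ ∈ ℝ^{p×p} be a symmetric positive definite matrix with inverse Ω₀ = Σ₀⁻¹ satisfying ‖Ω₀‖_{L1} ≤ M, let Σ' ∈ ℝ^{p×p} and let λ be a real number with ‖Ω₀‖_{L1} · |Σ' − Σ₀|_∞ ≤ λ < 1/p. Suppose Ω̂¹ ∈ ℝ^{p×p} satisfies the stopping criterion |Σ'Ω̂¹ − I|_∞ ≤ λ, and let Ω̂ be the symmetrization of Ω̂¹. Then |Ω̂ − Ω₀|_∞ ≤ (3 + (1 + 3pλ)/(1 − pλ)) · λ · M. -/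
open Matrix

/-- Elementwise ℓ∞ norm of a matrix: `max_{i,j} |A i j|`. -/
noncomputable def matInf {p : ℕ} (A : Matrix (Fin p) (Fin p) ℝ) : ℝ :=
  ⨆ i, ⨆ j, |A i j|

/-- Matrix L₁ norm: maximum absolute column sum. -/
noncomputable def matL1 {p : ℕ} (A : Matrix (Fin p) (Fin p) ℝ) : ℝ :=
  ⨆ j, ∑ i, |A i j|

/-- Symmetrization: each entry is the one of smaller absolute value among `A i j`, `A j i`. -/
noncomputable def symmetrize {p : ℕ} (A : Matrix (Fin p) (Fin p) ℝ) :
    Matrix (Fin p) (Fin p) ℝ :=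
  Matrix.of fun i j => if |A i j| ≤ |A j i| then A i j else A j i

section aux

variable {p : ℕ}

lemma abs_le_matInf (A : Matrix (Fin p) (Fin p) ℝ) (i j : Fin p) :
    |A i j| ≤ matInf A := by
  have h1 : |A i j| ≤ ⨆ j, |A i j| :=
    le_ciSup (f := fun j => |A i j|) (Set.Finite.bddAbove (Set.finite_range _)) j
  exact h1.trans (le_ciSup (f := fun i => ⨆ j, |A i j|)
    (Set.Finite.bddAbove (Set.finite_range _)) i)

lemma matInf_le [Nonempty (Fin p)] {A : Matrix (Fin p) (Fin p) ℝ} {c : ℝ}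
    (h : ∀ i j, |A i j| ≤ c) : matInf A ≤ c :=
  ciSup_le fun i => ciSup_le fun j => h i j

lemma colsum_le_matL1 (A : Matrix (Fin p) (Fin p) ℝ) (j : Fin p) :
    ∑ i, |A i j| ≤ matL1 A :=
  le_ciSup (f := fun j => ∑ i, |A i j|) (Set.Finite.bddAbove (Set.finite_range _)) j

lemma matInf_nonneg [Nonempty (Fin p)] (A : Matrix (Fin p) (Fin p) ℝ) :
    0 ≤ matInf A :=
  le_trans (abs_nonneg _) (abs_le_matInf A (Classical.arbitrary _) (Classical.arbitrary _))

lemma matL1_nonneg [Nonempty (Fin p)] (A : Matrix (Fin p) (Fin p) ℝ) :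
    0 ≤ matL1 A :=
  le_trans (Finset.sum_nonneg fun i _ => abs_nonneg _)
    (colsum_le_matL1 A (Classical.arbitrary _))

lemma abs_mul_apply_le (A B : Matrix (Fin p) (Fin p) ℝ) (i j : Fin p) :
    |(A * B) i j| ≤ ∑ k, |A i k| * |B k j| := by
  rw [Matrix.mul_apply]
  exact (Finset.abs_sum_le_sum_abs _ _).trans (le_of_eq (by simp [abs_mul]))

end aux

/-- **Lemma 1 (deterministic CLIME/GISS^ρ error bound).** -/
theorem stmt0 {p : ℕ} (hp : 1 ≤ p)
    (S₀ : Matrix (Fin p) (Fin p) ℝ) (hSsym : S₀.IsSymm) (hSpd : S₀.PosDef)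
    (Ω₀ : Matrix (Fin p) (Fin p) ℝ) (hΩ : Ω₀ = S₀⁻¹)
    (M : ℝ) (hM : matL1 Ω₀ ≤ M)
    (S' : Matrix (Fin p) (Fin p) ℝ) (lam : ℝ)
    (hlow : matL1 Ω₀ * matInf (S' - S₀) ≤ lam) (hhigh : lam < 1 / (p : ℝ))
    (Ωhat1 : Matrix (Fin p) (Fin p) ℝ)
    (hstop : matInf (S' * Ωhat1 - 1) ≤ lam) :
    matInf (symmetrize Ωhat1 - Ω₀) ≤
      (3 + (1 + 3 * (p : ℝ) * lam) / (1 - (p : ℝ) * lam)) * lam * M := by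
  have hpos : 0 < p := hp
  have : Nonempty (Fin p) := Fin.pos_iff_nonempty.mp hpos
  have hp0 : (0 : ℝ) < (p : ℝ) := by exact_mod_cast hpos
  -- symmetry of Ω₀
  have hΩsymT : Ω₀ᵀ = Ω₀ := by
    rw [hΩ, Matrix.transpose_nonsing_inv, hSsym.eq]
  have hsymm : ∀ i k, Ω₀ i k = Ω₀ k i := fun i k =>
    (congrFun (congrFun hΩsymT i) k).symm
  -- Ω₀ * S₀ = 1
  have hdet : IsUnit S₀.det := isUnit_iff_ne_zero.mpr (ne_of_gt hSpd.det_pos)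
  have hOS : Ω₀ * S₀ = 1 := by rw [hΩ]; exact Matrix.nonsing_inv_mul S₀ hdet
  -- nonnegativity facts
  have hlam0 : 0 ≤ lam :=
    le_trans (mul_nonneg (matL1_nonneg Ω₀) (matInf_nonneg _)) hlow
  have hM0 : 0 ≤ M := le_trans (matL1_nonneg Ω₀) hM
  have hc1 : 0 < 1 - (p : ℝ) * lam := by
    have : (p : ℝ) * lam < (p : ℝ) * (1 / (p : ℝ)) :=
      mul_lt_mul_of_pos_left hhigh hp0
    rw [mul_one_div_cancel (ne_of_gt hp0)] at this
    linarith
  -- row sums of Ω₀ bounded by M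
  have hrow : ∀ i, ∑ k, |Ω₀ i k| ≤ M := fun i => by
    have he : ∑ k, |Ω₀ i k| = ∑ k, |Ω₀ k i| :=
      Finset.sum_congr rfl fun k _ => by rw [hsymm i k]
    rw [he]; exact (colsum_le_matL1 Ω₀ i).trans hM
  set X := S' * Ωhat1 - 1 with hX
  set E := S' - S₀ with hE
  set G := Ω₀ * E with hGdef
  set D := Ωhat1 - Ω₀ with hD
  set t := matInf D with ht
  have ht0 : 0 ≤ t := matInf_nonneg D
  -- entries of G bounded by lam
  have hG : ∀ i k, |G i k| ≤ lam := fun i k => by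
    calc |G i k| ≤ ∑ l, |Ω₀ i l| * |E l k| := abs_mul_apply_le Ω₀ E i k
      _ ≤ ∑ l, |Ω₀ i l| * matInf E :=
          Finset.sum_le_sum fun l _ =>
            mul_le_mul_of_nonneg_left (abs_le_matInf E l k) (abs_nonneg _)
      _ = (∑ l, |Ω₀ i l|) * matInf E := (Finset.sum_mul _ _ _).symm
      _ ≤ matL1 Ω₀ * matInf E := by
          refine mul_le_mul_of_nonneg_right ?_ (matInf_nonneg E)
          have he : ∑ l, |Ω₀ i l| = ∑ l, |Ω₀ l i| :=
            Finset.sum_congr rfl fun l _ => by rw [hsymm i l]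
          rw [he]; exact colsum_le_matL1 Ω₀ i
      _ ≤ lam := hlow
  -- key identity
  have key : D = Ω₀ * X - G * Ω₀ - G * D := by
    have h1 : Ω₀ * X - G * Ω₀ - G * D = Ω₀ * S₀ * Ωhat1 - Ω₀ := by
      rw [hX, hGdef, hE, hD]; noncomm_ring
    rw [h1, hOS, one_mul, hD]
  -- entrywise bounds on the three terms
  have term1 : ∀ i j, |(Ω₀ * X) i j| ≤ M * lam := fun i j => by
    calc |(Ω₀ * X) i j| ≤ ∑ k, |Ω₀ i k| * |X k j| := abs_mul_apply_le _ _ i j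
      _ ≤ ∑ k, |Ω₀ i k| * lam :=
          Finset.sum_le_sum fun k _ =>
            mul_le_mul_of_nonneg_left ((abs_le_matInf X k j).trans hstop) (abs_nonneg _)
      _ = (∑ k, |Ω₀ i k|) * lam := (Finset.sum_mul _ _ _).symm
      _ ≤ M * lam := mul_le_mul_of_nonneg_right (hrow i) hlam0
  have term2 : ∀ i j, |(G * Ω₀) i j| ≤ lam * M := fun i j => by
    calc |(G * Ω₀) i j| ≤ ∑ k, |G i k| * |Ω₀ k j| := abs_mul_apply_le _ _ i j
      _ ≤ ∑ k, lam * |Ω₀ k j| :=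
          Finset.sum_le_sum fun k _ =>
            mul_le_mul_of_nonneg_right (hG i k) (abs_nonneg _)
      _ = lam * ∑ k, |Ω₀ k j| := (Finset.mul_sum _ _ _).symm
      _ ≤ lam * M :=
          mul_le_mul_of_nonneg_left ((colsum_le_matL1 Ω₀ j).trans hM) hlam0
  have term3 : ∀ i j, |(G * D) i j| ≤ (p : ℝ) * lam * t := fun i j => by
    calc |(G * D) i j| ≤ ∑ k, |G i k| * |D k j| := abs_mul_apply_le _ _ i j
      _ ≤ ∑ _k : Fin p, lam * t :=
          Finset.sum_le_sum fun k _ =>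
            mul_le_mul (hG i k) (abs_le_matInf D k j) (abs_nonneg _) hlam0
      _ = (p : ℝ) * (lam * t) := by
          rw [Finset.sum_const, Finset.card_univ, Fintype.card_fin, nsmul_eq_mul]
      _ = (p : ℝ) * lam * t := by ring
  -- fixed point bound on t
  have hDij : ∀ i j, |D i j| ≤ M * lam + lam * M + (p : ℝ) * lam * t := fun i j => by
    have hentry : D i j = (Ω₀ * X) i j - (G * Ω₀) i j - (G * D) i j := by
      have h := congrFun (congrFun key i) j
      simpa [Matrix.sub_apply] using h
    rw [hentry]
    calc |(Ω₀ * X) i j - (G * Ω₀) i j - (G * D) i j|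
        ≤ |(Ω₀ * X) i j - (G * Ω₀) i j| + |(G * D) i j| := abs_sub _ _
      _ ≤ |(Ω₀ * X) i j| + |(G * Ω₀) i j| + |(G * D) i j| := by
          have := abs_sub ((Ω₀ * X) i j) ((G * Ω₀) i j)
          linarith
      _ ≤ M * lam + lam * M + (p : ℝ) * lam * t := by
          have := term1 i j; have := term2 i j; have := term3 i j; linarith
  have htfix : t ≤ M * lam + lam * M + (p : ℝ) * lam * t := matInf_le hDij
  have htb : t * (1 - (p : ℝ) * lam) ≤ 2 * M * lam := by nlinarith
  -- symmetrization does not increase the error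
  have hsymle : matInf (symmetrize Ωhat1 - Ω₀) ≤ t := by
    apply matInf_le
    intro i j
    by_cases h : |Ωhat1 i j| ≤ |Ωhat1 j i|
    · have he : (symmetrize Ωhat1 - Ω₀) i j = D i j := by
        simp [symmetrize, Matrix.sub_apply, h, hD]
      rw [he]; exact abs_le_matInf D i j
    · have he : (symmetrize Ωhat1 - Ω₀) i j = D j i := by
        simp only [symmetrize, Matrix.sub_apply, Matrix.of_apply, if_neg h, hD]
        rw [hsymm i j]
      rw [he]; exact abs_le_matInf D j i
  -- conclude
  have h4 : (3 + (1 + 3 * (p : ℝ) * lam) / (1 - (p : ℝ) * lam)) =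
      4 / (1 - (p : ℝ) * lam) := by
    field_simp
    ring
  have hgoal : matInf (symmetrize Ωhat1 - Ω₀) * (1 - (p : ℝ) * lam) ≤ 4 * lam * M := by
    have h1 : matInf (symmetrize Ωhat1 - Ω₀) * (1 - (p : ℝ) * lam) ≤
        t * (1 - (p : ℝ) * lam) := mul_le_mul_of_nonneg_right hsymle hc1.le
    nlinarith [mul_nonneg hlam0 hM0]
  calc matInf (symmetrize Ωhat1 - Ω₀)
      ≤ 4 * lam * M / (1 - (p : ℝ) * lam) := by
        rw [le_div_iff₀ hc1]; exact hgoal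
    _ = (3 + (1 + 3 * (p : ℝ) * lam) / (1 - (p : ℝ) * lam)) * lam * M := by
        rw [h4]
        ring
end

section
/- Let Σₙ ∈ ℝ^{p×p}, λ ≥ 0, and for each 1 ≤ i ≤ p let e_i be the i-th standard basis vector of ℝᵖ. Consider the matrix problem: minimize ‖Ω‖₁ over Ω ∈ ℝ^{p×p} subject to |ΣₙΩ − I|_∞ ≤ λ; and for each i the vector problem: minimize |β|₁ over β ∈ ℝᵖ subject to |Σₙβ − e_i|_∞ ≤ λ. Then: (i) if for each i the vector β̂_i is a minimizer of the i-th vector problem, the matrix [β̂₁, β̂₂, …, β̂_p] is a minimizer of the matrix problem; and (ii) conversely, if Ω̂ is a minimizer of the matrix problem, then for each i the i-th column of Ω̂ is a minimizer of the i-th vector problem. -/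
open Matrix

/-- Elementwise L₁ norm of a matrix: `Σ_{i,j} |A i j|`. -/
def matElemL1 {p : ℕ} (A : Matrix (Fin p) (Fin p) ℝ) : ℝ :=
  ∑ i, ∑ j, |A i j|

/-- Vector ℓ∞ norm. -/
noncomputable def vecInf {p : ℕ} (v : Fin p → ℝ) : ℝ :=
  ⨆ i, |v i|

/-- Vector ℓ₁ norm. -/
def vecL1 {p : ℕ} (v : Fin p → ℝ) : ℝ :=
  ∑ i, |v i|

lemma vecInf_le_iff {p : ℕ} [Nonempty (Fin p)] (v : Fin p → ℝ) (c : ℝ) :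
    vecInf v ≤ c ↔ ∀ i, |v i| ≤ c :=
  ciSup_le_iff (Set.Finite.bddAbove (Set.finite_range _))

lemma matInf_le_iff {p : ℕ} [Nonempty (Fin p)] (A : Matrix (Fin p) (Fin p) ℝ) (c : ℝ) :
    matInf A ≤ c ↔ ∀ i j, |A i j| ≤ c := by
  unfold matInf
  rw [ciSup_le_iff (Set.Finite.bddAbove (Set.finite_range _))]
  exact forall_congr' fun i => ciSup_le_iff (Set.Finite.bddAbove (Set.finite_range _))

lemma entry_eq {p : ℕ} (Sn Ω : Matrix (Fin p) (Fin p) ℝ) (i j : Fin p) :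
    (Sn * Ω - 1) i j = ((Sn.mulVec (fun k => Ω k j) - Pi.single j 1 : Fin p → ℝ) i) := by
  simp [Matrix.mul_apply, Matrix.mulVec, dotProduct, Matrix.one_apply, Pi.single_apply]

lemma matElemL1_eq {p : ℕ} (Ω : Matrix (Fin p) (Fin p) ℝ) :
    matElemL1 Ω = ∑ j, vecL1 (fun k => Ω k j) := by
  unfold matElemL1 vecL1; rw [Finset.sum_comm]


/-- The CLIME matrix problem decomposes into `p` independent column problems. -/
theorem stmt11 {p : ℕ} (hp : 1 ≤ p)
    (Sn : Matrix (Fin p) (Fin p) ℝ) (lam : ℝ) (hlam : 0 ≤ lam) :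
    -- (i) columnwise minimizers assemble into a matrix minimizer
    ((∀ βhat : Fin p → Fin p → ℝ,
      (∀ i, vecInf (Sn.mulVec (βhat i) - Pi.single i 1) ≤ lam ∧
        ∀ β : Fin p → ℝ, vecInf (Sn.mulVec β - Pi.single i 1) ≤ lam →
          vecL1 (βhat i) ≤ vecL1 β) →
      (matInf (Sn * (Matrix.of fun i j => βhat j i) - 1) ≤ lam ∧
        ∀ Ω' : Matrix (Fin p) (Fin p) ℝ, matInf (Sn * Ω' - 1) ≤ lam →
          matElemL1 (Matrix.of fun i j => βhat j i) ≤ matElemL1 Ω')) ∧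
    -- (ii) the columns of a matrix minimizer are columnwise minimizers
    (∀ Ωhat : Matrix (Fin p) (Fin p) ℝ,
      (matInf (Sn * Ωhat - 1) ≤ lam ∧
        ∀ Ω' : Matrix (Fin p) (Fin p) ℝ, matInf (Sn * Ω' - 1) ≤ lam →
          matElemL1 Ωhat ≤ matElemL1 Ω') →
      ∀ i, vecInf (Sn.mulVec (fun j => Ωhat j i) - Pi.single i 1) ≤ lam ∧
        ∀ β : Fin p → ℝ, vecInf (Sn.mulVec β - Pi.single i 1) ≤ lam →
          vecL1 (fun j => Ωhat j i) ≤ vecL1 β)) := by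
  haveI : Nonempty (Fin p) := ⟨⟨0, hp⟩⟩
  constructor
  · intro βhat h
    constructor
    · rw [matInf_le_iff]
      intro i j
      rw [entry_eq]
      have : (fun k => (Matrix.of fun i j => βhat j i) k j) = βhat j := rfl
      rw [this]
      exact (vecInf_le_iff _ _).mp (h j).1 i
    · intro Ω' hΩ'
      rw [matElemL1_eq, matElemL1_eq]
      apply Finset.sum_le_sum
      intro j _
      have hfeas : vecInf (Sn.mulVec (fun k => Ω' k j) - Pi.single j 1) ≤ lam := by
        rw [vecInf_le_iff]
        intro i
        rw [← entry_eq]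
        exact (matInf_le_iff _ _).mp hΩ' i j
      exact (h j).2 _ hfeas
  · intro Ωhat hΩ i
    constructor
    · rw [vecInf_le_iff]
      intro k
      have := (matInf_le_iff _ _).mp hΩ.1 k i
      rwa [entry_eq] at this
    · intro β hβ
      set Ω' : Matrix (Fin p) (Fin p) ℝ :=
        Matrix.of fun k j => if j = i then β k else Ωhat k j with hΩ'def
      have hfeas : matInf (Sn * Ω' - 1) ≤ lam := by
        rw [matInf_le_iff]
        intro a b
        rw [entry_eq]
        by_cases hb : b = i
        · subst hb
          have : (fun k => Ω' k b) = β := by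
            funext k; simp [hΩ'def]
          rw [this]
          exact (vecInf_le_iff _ _).mp hβ a
        · have : (fun k => Ω' k b) = fun k => Ωhat k b := by
            funext k; simp [hΩ'def, hb]
          rw [this, ← entry_eq]
          exact (matInf_le_iff _ _).mp hΩ.1 a b
      have hle := hΩ.2 Ω' hfeas
      rw [matElemL1_eq, matElemL1_eq] at hle
      have hcols : ∀ j, j ≠ i →
          vecL1 (fun k => Ωhat k j) = vecL1 (fun k => Ω' k j) := by
        intro j hj
        congr 1
        funext k
        simp [hΩ'def, hj]
      have hcolβ : vecL1 (fun k => Ω' k i) = vecL1 β := by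
        congr 1; funext k; simp [hΩ'def]
      have h1 := Finset.add_sum_erase Finset.univ
        (fun j => vecL1 (fun k => Ωhat k j)) (Finset.mem_univ i)
      have h2 := Finset.add_sum_erase Finset.univ
        (fun j => vecL1 (fun k => Ω' k j)) (Finset.mem_univ i)
      have heq : ∑ j ∈ Finset.univ.erase i, vecL1 (fun k => Ωhat k j)
          = ∑ j ∈ Finset.univ.erase i, vecL1 (fun k => Ω' k j) := by
        apply Finset.sum_congr rfl
        intro j hj
        exact hcols j (Finset.ne_of_mem_erase hj)
      rw [← h1, ← h2, heq] at hle
      simp only at hle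
      rw [hcolβ] at hle
      linarith
end

section
/- Let Σ̂ ∈ ℝ^{p×p}, let S ⊆ {1,…,p} with |S| = s ≥ 1 and complement T, and suppose the columns Σ̂_i of Σ̂ satisfy (1/p)⟨Σ̂_i, Σ̂_i⟩ = 1 for all i, and |(1/p)⟨Σ̂_i, Σ̂_j⟩| ≤ μ for all i ≠ j, with μ < 1/(2s−1). Then for every j ∈ T, | ((1/p)Σ̂_SᵀΣ̂_S)⁻¹ (1/p)Σ̂_SᵀΣ̂_j |₁ ≤ μs/(1 − μ(s−1)) = 1 − ϑ, where ϑ = (1 − μ(2s−1))/(1 − μ(s−1)). -/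
open Matrix

/-- Mutual incoherence implies the irrepresentable / exact-recovery condition:
for any off-support column `j`, `|((1/p)Σ̂_SᵀΣ̂_S)⁻¹ (1/p)Σ̂_SᵀΣ̂_j|₁ ≤ μs/(1-μ(s-1)) = 1 - ϑ`. -/
theorem stmt13 {p : ℕ} (Shat : Matrix (Fin p) (Fin p) ℝ)
    (S : Finset (Fin p)) (hS : 1 ≤ S.card) (μ : ℝ)
    (hnorm : ∀ i, (1 / (p : ℝ)) * ∑ k, Shat k i * Shat k i = 1)
    (hcoh : ∀ i j, i ≠ j → |(1 / (p : ℝ)) * ∑ k, Shat k i * Shat k j| ≤ μ)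
    (hμ : μ < 1 / (2 * (S.card : ℝ) - 1))
    (G : Matrix {i // i ∈ S} {i // i ∈ S} ℝ)
    (hG : G = Matrix.of fun a b => (1 / (p : ℝ)) * ∑ k, Shat k a.1 * Shat k b.1) :
    ∀ j ∉ S,
      (∑ a : {i // i ∈ S},
          |G⁻¹.mulVec (fun b : {i // i ∈ S} =>
            (1 / (p : ℝ)) * ∑ k, Shat k b.1 * Shat k j) a|) ≤
        μ * (S.card : ℝ) / (1 - μ * ((S.card : ℝ) - 1)) ∧
      μ * (S.card : ℝ) / (1 - μ * ((S.card : ℝ) - 1)) =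
        1 - (1 - μ * (2 * (S.card : ℝ) - 1)) / (1 - μ * ((S.card : ℝ) - 1)) := by
  intro j hj
  set s : ℝ := (S.card : ℝ) with hsdef
  have hs1 : (1:ℝ) ≤ s := by rw [hsdef]; exact_mod_cast hS
  obtain ⟨i0, hi0⟩ := Finset.card_pos.mp hS
  have hμ0 : 0 ≤ μ :=
    le_trans (abs_nonneg _) (hcoh i0 j (fun h => hj (h ▸ hi0)))
  have h2s : 0 < 2*s - 1 := by linarith
  have hμ2s : μ * (2*s - 1) < 1 := by
    have := (lt_div_iff₀ h2s).mp hμ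
    linarith
  have hden : 0 < 1 - μ * (s - 1) := by nlinarith
  refine ⟨?_, ?_⟩
  · set v : {i // i ∈ S} → ℝ :=
      fun b => (1/(p:ℝ)) * ∑ k, Shat k b.1 * Shat k j with hv
    by_cases hinv : IsUnit G.det
    · set x : {i // i ∈ S} → ℝ := G⁻¹.mulVec v with hx
      have hGx : G.mulVec x = v := by
        rw [hx, Matrix.mulVec_mulVec, Matrix.mul_nonsing_inv G hinv,
          Matrix.one_mulVec]
      set T : ℝ := ∑ a, |x a| with hT
      have key : ∀ a : {i // i ∈ S}, |x a| + μ * |x a| ≤ μ + μ * T := by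
        intro a
        have hva : |v a| ≤ μ := hcoh a.1 j (fun h => hj (h ▸ a.2))
        have hrow : ∑ b, G a b * x b = v a := by
          have := congrFun hGx a
          simpa [Matrix.mulVec, dotProduct] using this
        have hGaa : G a a = 1 := by rw [hG]; exact hnorm a.1
        have hsplit : x a = v a - ∑ b ∈ Finset.univ.erase a, G a b * x b := by
          have h2 : G a a * x a + ∑ b ∈ Finset.univ.erase a, G a b * x b
              = ∑ b, G a b * x b :=
            Finset.add_sum_erase _ (fun b => G a b * x b) (Finset.mem_univ a)
          rw [hGaa, one_mul] at h2
          linarith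
        have habs : |v a - ∑ b ∈ Finset.univ.erase a, G a b * x b|
            ≤ μ + μ * (T - |x a|) := by
          calc |v a - ∑ b ∈ Finset.univ.erase a, G a b * x b|
              ≤ |v a| + |∑ b ∈ Finset.univ.erase a, G a b * x b| :=
                abs_sub _ _
            _ ≤ μ + ∑ b ∈ Finset.univ.erase a, |G a b * x b| := by
                gcongr
                exact Finset.abs_sum_le_sum_abs _ _
            _ ≤ μ + ∑ b ∈ Finset.univ.erase a, μ * |x b| := by
                gcongr with b hb
                rw [abs_mul]
                have hne : a.1 ≠ b.1 := fun h =>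
                  (Finset.mem_erase.mp hb).1 (Subtype.ext h.symm)
                have : |G a b| ≤ μ := by
                  rw [hG]; exact hcoh a.1 b.1 hne
                exact mul_le_mul_of_nonneg_right this (abs_nonneg _)
            _ = μ + μ * (T - |x a|) := by
                rw [← Finset.mul_sum]
                congr 1
                congr 1
                rw [hT, Finset.sum_erase_eq_sub (Finset.mem_univ a)]
        rw [← hsplit] at habs
        nlinarith
      have hsum : T + μ * T ≤ s * (μ + μ * T) := by
        have := Finset.sum_le_sum (fun a (_ : a ∈ Finset.univ) => key a)
        rw [Finset.sum_add_distrib, ← Finset.mul_sum, ← hT,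
          Finset.sum_const, Finset.card_univ, Fintype.card_coe,
          nsmul_eq_mul] at this
        exact this
      rw [le_div_iff₀ hden]; nlinarith
    · rw [Matrix.nonsing_inv_apply_not_isUnit G hinv]
      simp only [Matrix.zero_mulVec, Pi.zero_apply, abs_zero,
        Finset.sum_const_zero]
      positivity
  · field_simp
    ring
end
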